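/- Let A be a real N×d matrix (whose rows are the training inputs), Y a real N×d matrix (whose rows are the training targets), and ι : Fin m → Fin d an injective map selecting the columns belonging to one subgrid; write B = A.submatrix id ι for the N×m matrix of selected input columns and Y_ι = Y.submatrix id ι for the selected target columns. Assume rank(A) = rank(B). Then for every d×d matrix W minimizing the squared loss ∑_{i,j} ((A·W − Y) i j)² over all d×d real matrices, and every m×m matrix V minimizing ∑_{i,j} ((B·V − Y_ι) i j)² over all m×m real matrices, the predictions on the selected components coincide: (A·W).submatrix id ι = B·V. -/

import Mathlib

/-!
A least-squares solution satisfies the normal equations, and fitted values satisfying the normal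
equations of a design matrix `B` are unique, since `Bᵀ B Z = 0` forces `B Z = 0`. The columns of
`B = A.submatrix id ι` are columns of `A`, so equal rank makes the two column spaces equal and
`A = B C`. Hence `(A W)_ι = B (C W)_ι` is a fit by `B`, and the normal equations of the full
problem, read on the rows and columns `ι`, are those of the decomposed problem; so it coincides
with `B V`.
-/

open Matrix

section LeastSquares

variable {n p q : Type*} [Fintype n] [Fintype p] [Fintype q]

theorem Matrix.sum_sum_add_smul_sq (R S : Matrix n q ℝ) (t : ℝ) :
    ∑ i, ∑ j, ((R + t • S) i j) ^ 2 =
      (∑ i, ∑ j, S i j ^ 2) * (t * t) + (2 * ∑ i, ∑ j, R i j * S i j) * t +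
        ∑ i, ∑ j, R i j ^ 2 := by
  simp only [add_apply, smul_apply, smul_eq_mul, Finset.mul_sum, Finset.sum_mul,
    ← Finset.sum_add_distrib]
  exact Finset.sum_congr rfl fun i _ => Finset.sum_congr rfl fun j _ => by ring

theorem Matrix.sum_sum_mul_eq_zero_of_forall_le (R S : Matrix n q ℝ)
    (h : ∀ t : ℝ, ∑ i, ∑ j, R i j ^ 2 ≤ ∑ i, ∑ j, ((R + t • S) i j) ^ 2) :
    ∑ i, ∑ j, R i j * S i j = 0 := by
  have hd := discrim_le_zero (a := ∑ i, ∑ j, S i j ^ 2) (b := 2 * ∑ i, ∑ j, R i j * S i j)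
    (c := 0) fun t => by linarith [h t, sum_sum_add_smul_sq R S t]
  rw [discrim, mul_zero, sub_zero] at hd
  nlinarith [sq_nonneg (∑ i, ∑ j, R i j * S i j)]

theorem Matrix.sum_sum_mul_mul_eq (R : Matrix n q ℝ) (X : Matrix n p ℝ) (E : Matrix p q ℝ) :
    ∑ i, ∑ j, R i j * (X * E) i j = ∑ k, ∑ j, (Xᵀ * R) k j * E k j :=
  calc ∑ i, ∑ j, R i j * (X * E) i j = trace (R * (X * E)ᵀ) := rfl
    _ = trace (Xᵀ * R * Eᵀ) := by rw [transpose_mul, ← Matrix.mul_assoc, trace_mul_cycle]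
    _ = ∑ k, ∑ j, (Xᵀ * R) k j * E k j := rfl

theorem Matrix.eq_zero_of_sum_sum_sq_eq_zero {M : Matrix p q ℝ}
    (h : ∑ i, ∑ j, M i j ^ 2 = 0) : M = 0 := by
  rw [Fintype.sum_eq_zero_iff_of_nonneg fun i => by positivity] at h
  ext i j
  exact pow_eq_zero_iff two_ne_zero |>.mp <| congrFun
    ((Fintype.sum_eq_zero_iff_of_nonneg fun j => by positivity).mp (congrFun h i)) j

theorem Matrix.transpose_mul_sub_eq_zero_of_forall_le (X : Matrix n p ℝ) (Y : Matrix n q ℝ)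
    (W : Matrix p q ℝ)
    (hW : ∀ W' : Matrix p q ℝ,
      ∑ i, ∑ j, ((X * W - Y) i j) ^ 2 ≤ ∑ i, ∑ j, ((X * W' - Y) i j) ^ 2) :
    Xᵀ * (X * W - Y) = 0 := by
  -- Along `E = Xᵀ (X W - Y)` the first-order change of the loss is `∑ E²`, which must vanish.
  set E := Xᵀ * (X * W - Y)
  have hperturb (t : ℝ) : X * (W + t • E) - Y = (X * W - Y) + t • (X * E) := by
    rw [Matrix.mul_add, Matrix.mul_smul]; abel
  have hfirst := sum_sum_mul_eq_zero_of_forall_le _ (X * E) fun t => hperturb t ▸ hW _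
  rw [sum_sum_mul_mul_eq] at hfirst
  exact eq_zero_of_sum_sum_sq_eq_zero (by simpa only [sq] using hfirst)

end LeastSquares

theorem Matrix.mul_eq_mul_of_transpose_mul_sub_eq_zero {n p q : Type*} [Fintype n] [Fintype p]
    {X : Matrix n p ℝ} {Y : Matrix n q ℝ} {W W' : Matrix p q ℝ}
    (hW : Xᵀ * (X * W - Y) = 0) (hW' : Xᵀ * (X * W' - Y) = 0) :
    X * W = X * W' := by
  have h : (Xᴴ * X) * (W - W') = 0 := by
    rw [conjTranspose_eq_transpose_of_trivial, Matrix.mul_assoc, Matrix.mul_sub,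
      ← sub_sub_sub_cancel_right _ _ Y, Matrix.mul_sub, hW, hW', sub_zero]
  rwa [conjTranspose_mul_self_mul_eq_zero, Matrix.mul_sub, sub_eq_zero] at h

section ColumnSpace

variable {K n p q : Type*} [Field K] [Fintype p] [Fintype q]

theorem Matrix.exists_eq_mul_mul_of_rank_mul_eq (A : Matrix n p K) (P : Matrix p q K)
    (h : (A * P).rank = A.rank) : ∃ C : Matrix q p K, A = A * P * C := by
  have hrange : LinearMap.range (A * P).mulVecLin = LinearMap.range A.mulVecLin :=
    Submodule.eq_of_le_of_finrank_eq
      (by rw [mulVecLin_mul]; exact LinearMap.range_comp_le_range _ _) h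
  classical
  have hcol (j : p) : A.col j ∈ LinearMap.range (A * P).mulVecLin := by
    rw [hrange, ← mulVec_single_one]
    exact LinearMap.mem_range_self A.mulVecLin _
  choose c hc using hcol
  refine ⟨(of c)ᵀ, ext fun i j => ?_⟩
  rw [← col_apply A j i, ← hc j]
  rfl

theorem Matrix.exists_eq_submatrix_mul_of_rank_eq (A : Matrix n p K) (f : q → p)
    (h : A.rank = (A.submatrix id f).rank) : ∃ C : Matrix q p K, A = A.submatrix id f * C := by
  classical
  have hsel : A * (1 : Matrix p p K).submatrix (Equiv.refl p) f = A.submatrix id f :=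
    mul_submatrix_one _ _ _
  rw [← hsel] at h ⊢
  exact exists_eq_mul_mul_of_rank_mul_eq A _ h.symm

end ColumnSpace

theorem spatial_decomposition_same_prediction_general {N d m : ℕ}
    (A Y : Matrix (Fin N) (Fin d) ℝ) (ι : Fin m → Fin d)
    (hrank : A.rank = (A.submatrix id ι).rank)
    (W : Matrix (Fin d) (Fin d) ℝ)
    (hW : ∀ W' : Matrix (Fin d) (Fin d) ℝ,
      ∑ i, ∑ j, ((A * W - Y) i j) ^ 2 ≤ ∑ i, ∑ j, ((A * W' - Y) i j) ^ 2)
    (V : Matrix (Fin m) (Fin m) ℝ)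
    (hV : ∀ V' : Matrix (Fin m) (Fin m) ℝ,
      ∑ i, ∑ j, ((A.submatrix id ι * V - Y.submatrix id ι) i j) ^ 2 ≤
        ∑ i, ∑ j, ((A.submatrix id ι * V' - Y.submatrix id ι) i j) ^ 2) :
    (A * W).submatrix id ι = A.submatrix id ι * V := by
  obtain ⟨C, hC⟩ := A.exists_eq_submatrix_mul_of_rank_eq ι hrank
  have hfactor : (A * W).submatrix id ι = A.submatrix id ι * (C * W).submatrix id ι := by
    conv_lhs => rw [hC, Matrix.mul_assoc]
    rw [submatrix_mul _ _ id id ι Function.bijective_id, submatrix_id_id]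
  have hnormal : (A.submatrix id ι)ᵀ * ((A * W).submatrix id ι - Y.submatrix id ι) = 0 := by
    have h := congrArg (·.submatrix ι ι) (transpose_mul_sub_eq_zero_of_forall_le A Y W hW)
    rwa [submatrix_mul _ _ ι id ι Function.bijective_id, submatrix_zero, ← transpose_submatrix,
      submatrix_sub] at h
  rw [hfactor] at hnormal ⊢
  exact mul_eq_mul_of_transpose_mul_sub_eq_zero hnormal
    (transpose_mul_sub_eq_zero_of_forall_le _ _ V hV)

/-- **Proposition 3.1 (information loss under spatial decomposition).**
Let `A` be the `N × d` matrix of training inputs, `Y` the `N × d` matrix of training targets,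
and `ι : Fin m → Fin d` an injective selection of the columns belonging to one subgrid, with
`B = A.submatrix id ι`.  If `rank A = rank B`, then every least-squares solution `W` of the
full problem and every least-squares solution `V` of the decomposed problem make the same
predictions on the selected components: `(A * W).submatrix id ι = B * V`. -/
theorem spatial_decomposition_same_prediction {N d m : ℕ}
    (A Y : Matrix (Fin N) (Fin d) ℝ) (ι : Fin m → Fin d) (hι : Function.Injective ι)
    (hrank : A.rank = (A.submatrix id ι).rank)
    (W : Matrix (Fin d) (Fin d) ℝ)
    (hW : ∀ W' : Matrix (Fin d) (Fin d) ℝ,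
      ∑ i, ∑ j, ((A * W - Y) i j) ^ 2 ≤ ∑ i, ∑ j, ((A * W' - Y) i j) ^ 2)
    (V : Matrix (Fin m) (Fin m) ℝ)
    (hV : ∀ V' : Matrix (Fin m) (Fin m) ℝ,
      ∑ i, ∑ j, ((A.submatrix id ι * V - Y.submatrix id ι) i j) ^ 2 ≤
        ∑ i, ∑ j, ((A.submatrix id ι * V' - Y.submatrix id ι) i j) ^ 2) :
    (A * W).submatrix id ι = A.submatrix id ι * V :=
  spatial_decomposition_same_prediction_general A Y ι hrank W hW V hV
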